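/- Let Θ_f be a nonnegative random variable with 0 < E[Θ_f] < ∞, let f_n = P(Poisson(Θ_f) = n) be the mixed Poisson probability mass function, and define g_n = (n+1) f_{n+1} / E[Θ_f]. Then {g_n} is again a mixed Poisson probability mass function: g_n = P(Poisson(Θ_g) = n), where Θ_g has distribution function P(Θ_g ≤ x) = E[Θ_f · 1{Θ_f ≤ x}] / E[Θ_f]. -/
import Mathlib


open MeasureTheory Real

/-- The mixed Poisson probability mass function with mixing random variable `Θ`. -/
noncomputable def mixedPoisson {Ω : Type*} [MeasurableSpace Ω] (μ : Measure Ω)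
    (Θ : Ω → ℝ) (n : ℕ) : ℝ :=
  ∫ ω, Real.exp (-Θ ω) * Θ ω ^ n / (n.factorial : ℝ) ∂μ

/-- if `f` is the mixed Poisson pmf with mixing variable `Θf` and
`g n = (n+1) f (n+1) / E[Θf]`, then `g` is the mixed Poisson pmf whose mixing
distribution `ν` has distribution function `x ↦ E[Θf · 1{Θf ≤ x}] / E[Θf]`. -/
theorem stmt0 {Ω : Type*} [MeasurableSpace Ω] (μ : Measure Ω) [IsProbabilityMeasure μ]
    (Θf : Ω → ℝ) (hmeas : Measurable Θf) (hnn : ∀ ω, 0 ≤ Θf ω)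
    (hint : Integrable Θf μ) (hpos : 0 < ∫ ω, Θf ω ∂μ)
    (f g : ℕ → ℝ)
    (hf : ∀ n, f n = mixedPoisson μ Θf n)
    (hg : ∀ n, g n = ((n : ℝ) + 1) * f (n + 1) / ∫ ω, Θf ω ∂μ) :
    ∃ ν : Measure ℝ, IsProbabilityMeasure ν ∧
      (∀ x : ℝ, (ν (Set.Iic x)).toReal
        = (∫ ω, Θf ω * ({ω' | Θf ω' ≤ x}.indicator (fun _ => (1 : ℝ)) ω) ∂μ)
            / ∫ ω, Θf ω ∂μ) ∧
      (∀ n : ℕ, g n = ∫ x, Real.exp (-x) * x ^ n / (n.factorial : ℝ) ∂ν) := by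
  simp only [mixedPoisson] at hf
  set E : ℝ := ∫ ω, Θf ω ∂μ with hE
  set ν0 : Measure ℝ := Measure.map Θf (μ.withDensity (fun ω => ENNReal.ofReal (Θf ω))) with hν0
  set ν : Measure ℝ := (ENNReal.ofReal E)⁻¹ • ν0 with hνdef
  have hEne0 : ENNReal.ofReal E ≠ 0 := by simp [ENNReal.ofReal_eq_zero, not_le, hpos]
  have hEnetop : ENNReal.ofReal E ≠ ⊤ := ENNReal.ofReal_ne_top
  have hwd : ∀ s : Set ℝ, MeasurableSet s →
      ν0 s = ∫⁻ ω in Θf ⁻¹' s, ENNReal.ofReal (Θf ω) ∂μ := by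
    intro s hs
    rw [hν0, Measure.map_apply hmeas hs, withDensity_apply _ (hmeas hs)]
  have hν0univ : ν0 Set.univ = ENNReal.ofReal E := by
    rw [hwd Set.univ MeasurableSet.univ, Set.preimage_univ, Measure.restrict_univ,
      ← ofReal_integral_eq_lintegral_ofReal hint (Filter.Eventually.of_forall hnn)]
  refine ⟨ν, ?_, ?_, ?_⟩
  · constructor
    rw [hνdef, Measure.smul_apply, hν0univ, smul_eq_mul, ENNReal.inv_mul_cancel hEne0 hEnetop]
  · intro x
    have hsetm : MeasurableSet {ω | Θf ω ≤ x} := hmeas measurableSet_Iic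
    have hind : (∫ ω, Θf ω * ({ω' | Θf ω' ≤ x}.indicator (fun _ => (1 : ℝ)) ω) ∂μ)
        = ∫ ω in {ω | Θf ω ≤ x}, Θf ω ∂μ := by
      rw [← integral_indicator hsetm]
      apply integral_congr_ae
      filter_upwards with ω
      by_cases h : Θf ω ≤ x <;> simp [Set.indicator_apply, h]
    have hν0x : ν0 (Set.Iic x) = ENNReal.ofReal (∫ ω in {ω | Θf ω ≤ x}, Θf ω ∂μ) := by
      rw [hwd _ measurableSet_Iic,
        ← ofReal_integral_eq_lintegral_ofReal (hint.restrict)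
          (ae_restrict_of_ae (Filter.Eventually.of_forall hnn))]
      rfl
    rw [hνdef, Measure.smul_apply, smul_eq_mul, ENNReal.toReal_mul, hν0x,
      ENNReal.toReal_inv, ENNReal.toReal_ofReal hpos.le,
      ENNReal.toReal_ofReal (setIntegral_nonneg hsetm fun ω _ => hnn ω), hind]
    ring
  · intro n
    have hmh : Measurable fun x : ℝ => Real.exp (-x) * x ^ n / (n.factorial : ℝ) := by
      fun_prop
    have step1 : (∫ x, Real.exp (-x) * x ^ n / (n.factorial : ℝ) ∂ν)
        = E⁻¹ * ∫ x, Real.exp (-x) * x ^ n / (n.factorial : ℝ) ∂ν0 := by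
      rw [hνdef, integral_smul_measure, ENNReal.toReal_inv, ENNReal.toReal_ofReal hpos.le,
        smul_eq_mul]
    have step2 : (∫ x, Real.exp (-x) * x ^ n / (n.factorial : ℝ) ∂ν0)
        = ∫ ω, Θf ω * (Real.exp (-Θf ω) * Θf ω ^ n / (n.factorial : ℝ)) ∂μ := by
      rw [hν0, integral_map hmeas.aemeasurable hmh.aestronglyMeasurable]
      have : (fun ω => ENNReal.ofReal (Θf ω)) = fun ω => ((Θf ω).toNNReal : ENNReal) := rfl
      rw [this, integral_withDensity_eq_integral_smul (hmeas.real_toNNReal)]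
      apply integral_congr_ae
      filter_upwards with ω
      simp [NNReal.smul_def, Real.coe_toNNReal _ (hnn ω)]
    have step3 : (((n : ℝ) + 1) * f (n + 1))
        = ∫ ω, Θf ω * (Real.exp (-Θf ω) * Θf ω ^ n / (n.factorial : ℝ)) ∂μ := by
      rw [hf, ← integral_const_mul]
      apply integral_congr_ae
      filter_upwards with ω
      have hfac : ((n + 1).factorial : ℝ) = ((n : ℝ) + 1) * (n.factorial : ℝ) := by
        push_cast [Nat.factorial_succ]; ring
      have h1 : (n.factorial : ℝ) ≠ 0 := Nat.cast_ne_zero.mpr n.factorial_ne_zero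
      have h2 : ((n : ℝ) + 1) ≠ 0 := by positivity
      rw [hfac]
      field_simp
      ring
    rw [hg, step1, step2, ← step3, hE]
    ring
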